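/- arXiv:1510.06282 — 4 statements merged into one kernel-verified Lean document; each statement's English description precedes it below -/
import Mathlib

section
/- For r ∈ (0, 1] and φ ∈ (0, π), the series ∑_{k=1}^∞ (-1)^{k+1} r^k cos(kφ)/(k+2) is strictly less than ∑_{k=1}^∞ (-1)^{k+1} r^k/(k+2). -/
open Real Filter Topology MeasureTheory

/-!
Since `1 / (k + 2) = ∫₀¹ t ^ (k + 1) dt`, the difference `B - A` is
`∫₀¹ t · ∑_{k ≥ 1} x ^ k (cos kφ - 1) dt` with `x = -r t`. The inner series sums to
`x (1 + x) (cos φ - 1) / ((1 - 2 x cos φ + x²) (1 - x))`, which is positive for `-1 < x < 0`.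
Summation and integration may be exchanged by dominated convergence even when `r = 1`: writing the
partial sums through the geometric sums of `x e^{iφ}` and `x`, they are bounded by
`2 / sin φ + 2`, because `|1 - x e^{iφ}| ≥ sin φ`.
-/

lemma norm_sum_range_pow_succ_le {K : Type*} [NormedDivisionRing K] {z : K} (hz : ‖z‖ ≤ 1)
    (hz1 : z ≠ 1) (n : ℕ) : ‖∑ k ∈ Finset.range n, z ^ (k + 1)‖ ≤ 2 / ‖1 - z‖ := by
  have hsum : ∑ k ∈ Finset.range n, z ^ (k + 1) = z * ((z ^ n - 1) / (z - 1)) := by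
    simp_rw [pow_succ', ← Finset.mul_sum, geom_sum_eq hz1]
  have hpow : ‖z ^ n - 1‖ ≤ 2 := by
    refine (norm_sub_le _ _).trans ?_
    rw [norm_pow, norm_one]
    linarith [pow_le_one₀ (norm_nonneg z) hz (n := n)]
  rw [hsum, norm_mul, norm_div, norm_sub_rev z 1]
  calc ‖z‖ * (‖z ^ n - 1‖ / ‖1 - z‖) ≤ 1 * (2 / ‖1 - z‖) := by gcongr
    _ = 2 / ‖1 - z‖ := one_mul _

lemma re_ofReal_mul_exp_mul_I_pow (x φ : ℝ) (n : ℕ) :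
    (((x : ℂ) * Complex.exp (φ * Complex.I)) ^ n).re = x ^ n * cos (n * φ) := by
  rw [mul_pow, ← Complex.exp_nat_mul, ← mul_assoc, ← Complex.ofReal_pow, ← Complex.ofReal_natCast,
    ← Complex.ofReal_mul, Complex.re_ofReal_mul, Complex.exp_ofReal_mul_I_re]

lemma pow_mul_cos_sub_one_eq_re (x φ : ℝ) (n : ℕ) :
    x ^ n * (cos (n * φ) - 1) = (((x : ℂ) * Complex.exp (φ * Complex.I)) ^ n - (x : ℂ) ^ n).re := by
  rw [Complex.sub_re, re_ofReal_mul_exp_mul_I_pow, ← Complex.ofReal_pow, Complex.ofReal_re]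
  ring

lemma normSq_one_sub_ofReal_mul_exp_mul_I (x φ : ℝ) :
    Complex.normSq (1 - x * Complex.exp (φ * Complex.I)) = 1 - 2 * x * cos φ + x ^ 2 := by
  rw [Complex.normSq_apply]
  simp only [Complex.sub_re, Complex.sub_im, Complex.one_re, Complex.one_im, Complex.re_ofReal_mul,
    Complex.im_ofReal_mul, Complex.exp_ofReal_mul_I_re, Complex.exp_ofReal_mul_I_im]
  linear_combination x ^ 2 * sin_sq_add_cos_sq φ

lemma sin_sq_le_one_sub_two_mul_cos_add_sq (x φ : ℝ) : sin φ ^ 2 ≤ 1 - 2 * x * cos φ + x ^ 2 := by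
  nlinarith [sq_nonneg (x - cos φ), sin_sq_add_cos_sq φ]

lemma abs_sin_le_norm_one_sub_ofReal_mul_exp_mul_I (x φ : ℝ) :
    |sin φ| ≤ ‖1 - x * Complex.exp (φ * Complex.I)‖ := by
  rw [← abs_norm, ← sq_le_sq, Complex.sq_norm, normSq_one_sub_ofReal_mul_exp_mul_I]
  exact sin_sq_le_one_sub_two_mul_cos_add_sq x φ

noncomputable def cosKernel (x φ : ℝ) : ℝ :=
  x * (1 + x) * (cos φ - 1) / ((1 - 2 * x * cos φ + x ^ 2) * (1 - x))

lemma hasSum_pow_succ_mul_cos_sub_one {x : ℝ} (hx : |x| < 1) (φ : ℝ) :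
    HasSum (fun k : ℕ => x ^ (k + 1) * (cos ((k + 1) * φ) - 1)) (cosKernel x φ) := by
  set w : ℂ := x * Complex.exp (φ * Complex.I) with hw_def
  have hw : ‖w‖ < 1 := by simpa [w, Complex.norm_exp_ofReal_mul_I] using hx
  have geom : ∀ z : ℂ, ‖z‖ < 1 → HasSum (fun k : ℕ => z ^ (k + 1)) (z / (1 - z)) := fun z hz => by
    simpa only [pow_succ', div_eq_mul_inv] using (hasSum_geometric_of_norm_lt_one hz).mul_left z
  have hre := Complex.hasSum_re ((geom w hw).sub (geom x (by simpa using hx)))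
  convert hre using 1
  · funext k
    exact_mod_cast pow_mul_cos_sub_one_eq_re x φ (k + 1)
  · have hD : 0 < Complex.normSq (1 - w) := Complex.normSq_pos.2 <| sub_ne_zero.2 fun h => by
      rw [← h, norm_one] at hw
      exact lt_irrefl _ hw
    have hx1 : 1 - x ≠ 0 := by linarith [abs_lt.1 hx]
    have hx_re : ((x : ℂ) / (1 - x)).re = x / (1 - x) := by
      rw [← Complex.ofReal_one, ← Complex.ofReal_sub, ← Complex.ofReal_div, Complex.ofReal_re]
    rw [hw_def, normSq_one_sub_ofReal_mul_exp_mul_I] at hD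
    rw [Complex.sub_re, Complex.div_re, normSq_one_sub_ofReal_mul_exp_mul_I, hx_re]
    simp only [w, Complex.sub_re, Complex.sub_im, Complex.one_re, Complex.one_im,
      Complex.re_ofReal_mul, Complex.im_ofReal_mul, Complex.exp_ofReal_mul_I_re,
      Complex.exp_ofReal_mul_I_im]
    rw [← add_div, div_sub_div _ _ hD.ne' hx1, cosKernel]
    congr 1
    linear_combination x ^ 2 * (1 - x) * sin_sq_add_cos_sq φ

lemma abs_sum_range_pow_succ_mul_cos_sub_one_le {x φ : ℝ} (hx : |x| ≤ 1) (hx1 : x ≠ 1)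
    (hφ : sin φ ≠ 0) (n : ℕ) :
    |∑ k ∈ Finset.range n, x ^ (k + 1) * (cos ((k + 1) * φ) - 1)|
      ≤ 2 / |sin φ| + 2 / |1 - x| := by
  set w : ℂ := x * Complex.exp (φ * Complex.I)
  have hw_sin : |sin φ| ≤ ‖1 - w‖ := abs_sin_le_norm_one_sub_ofReal_mul_exp_mul_I x φ
  have hw1 : w ≠ 1 := fun h => by
    rw [h, sub_self, norm_zero] at hw_sin
    exact hφ (abs_nonpos_iff.1 hw_sin)
  have hx_norm : ‖1 - (x : ℂ)‖ = |1 - x| := by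
    rw [← Complex.ofReal_one, ← Complex.ofReal_sub, Complex.norm_real, Real.norm_eq_abs]
  have hsum : ∑ k ∈ Finset.range n, x ^ (k + 1) * (cos ((k + 1) * φ) - 1)
      = (∑ k ∈ Finset.range n, w ^ (k + 1) - ∑ k ∈ Finset.range n, (x : ℂ) ^ (k + 1)).re := by
    rw [← Finset.sum_sub_distrib, Complex.re_sum]
    refine Finset.sum_congr rfl fun k _ => ?_
    exact_mod_cast pow_mul_cos_sub_one_eq_re x φ (k + 1)
  calc |∑ k ∈ Finset.range n, x ^ (k + 1) * (cos ((k + 1) * φ) - 1)|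
      ≤ ‖∑ k ∈ Finset.range n, w ^ (k + 1) - ∑ k ∈ Finset.range n, (x : ℂ) ^ (k + 1)‖ :=
        hsum ▸ Complex.abs_re_le_norm _
    _ ≤ 2 / ‖1 - w‖ + 2 / ‖1 - (x : ℂ)‖ := by
        refine (norm_sub_le _ _).trans (add_le_add ?_ ?_)
        · exact norm_sum_range_pow_succ_le (by simpa [w, Complex.norm_exp_ofReal_mul_I] using hx)
            hw1 n
        · exact norm_sum_range_pow_succ_le (by simpa using hx) (by exact_mod_cast hx1) n
    _ ≤ 2 / |sin φ| + 2 / |1 - x| := by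
        rw [hx_norm]
        gcongr

lemma continuousOn_cosKernel {φ : ℝ} (hφ : sin φ ≠ 0) :
    ContinuousOn (fun x => cosKernel x φ) {1}ᶜ := by
  refine ContinuousOn.div (by fun_prop) (by fun_prop) fun x hx => mul_ne_zero ?_ ?_
  · have : 0 < sin φ ^ 2 := by positivity
    linarith [sin_sq_le_one_sub_two_mul_cos_add_sq x φ]
  · exact sub_ne_zero.2 (Ne.symm hx)

lemma cosKernel_pos {x φ : ℝ} (hx : -1 < x) (hx0 : x < 0) (hφ : cos φ < 1) :
    0 < cosKernel x φ := by
  have hD : 0 < 1 - 2 * x * cos φ + x ^ 2 := by nlinarith [neg_one_le_cos φ]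
  refine div_pos ?_ (mul_pos hD (by linarith))
  exact mul_pos_of_neg_of_neg (mul_neg_of_neg_of_pos hx0 (by linarith)) (by linarith)

lemma integral_mul_cosKernel_pos {r φ : ℝ} (hr0 : 0 < r) (hr1 : r ≤ 1) (hφ : sin φ ≠ 0) :
    0 < ∫ t in (0 : ℝ)..1, t * cosKernel (-(r * t)) φ := by
  have hcos : cos φ < 1 :=
    (cos_le_one φ).lt_of_ne fun h => hφ (sin_eq_zero_iff_cos_eq.2 (Or.inl h))
  refine intervalIntegral.intervalIntegral_pos_of_pos_on ?_ (fun t ht => ?_) zero_lt_one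
  · refine (continuousOn_id.mul ((continuousOn_cosKernel hφ).comp (by fun_prop)
      fun t ht => ?_)).intervalIntegrable
    rw [Set.uIcc_of_le zero_le_one] at ht
    have : 0 ≤ r * t := mul_nonneg hr0.le ht.1
    simp only [Set.mem_compl_iff, Set.mem_singleton_iff]
    linarith
  · have : r * t < 1 := by nlinarith [ht.1, ht.2]
    exact mul_pos ht.1 (cosKernel_pos (by linarith) (by nlinarith [ht.1]) hcos)

lemma tendsto_integral_mul_sum_range_pow_succ_mul_cos_sub_one {r φ : ℝ} (hr0 : 0 ≤ r)
    (hr1 : r ≤ 1) (hφ : sin φ ≠ 0) :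
    Tendsto (fun n => ∫ t in (0 : ℝ)..1,
        t * ∑ k ∈ Finset.range n, (-(r * t)) ^ (k + 1) * (cos ((k + 1) * φ) - 1))
      atTop (𝓝 (∫ t in (0 : ℝ)..1, t * cosKernel (-(r * t)) φ)) := by
  refine intervalIntegral.tendsto_integral_filter_of_dominated_convergence
    (fun _ => 2 / |sin φ| + 2) (.of_forall fun n => ?_) (.of_forall fun n => ?_)
    intervalIntegrable_const ?_
  · exact Continuous.aestronglyMeasurable (by fun_prop)
  · refine .of_forall fun t ht => ?_
    rw [Set.uIoc_of_le zero_le_one] at ht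
    have hrt : 0 ≤ r * t := mul_nonneg hr0 ht.1.le
    have hrt1 : r * t ≤ 1 := by nlinarith [ht.1, ht.2]
    have hsum := abs_sum_range_pow_succ_mul_cos_sub_one_le (x := -(r * t))
      (by rw [abs_neg, abs_of_nonneg hrt]; exact hrt1) (by linarith) hφ n
    have h2 : 2 / |1 - -(r * t)| ≤ 2 := by
      rw [abs_of_pos (by linarith)]
      exact div_le_self zero_le_two (by linarith)
    rw [norm_mul, Real.norm_eq_abs, abs_of_pos ht.1]
    calc t * |∑ k ∈ Finset.range n, (-(r * t)) ^ (k + 1) * (cos ((k + 1) * φ) - 1)|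
        ≤ 1 * (2 / |sin φ| + 2) := by gcongr; exacts [ht.2, hsum.trans (by linarith)]
      _ = 2 / |sin φ| + 2 := one_mul _
  · filter_upwards [volume.ae_ne 1] with t ht1 ht
    rw [Set.uIoc_of_le zero_le_one] at ht
    have hrt : |-(r * t)| < 1 := by
      rw [abs_neg, abs_of_nonneg (mul_nonneg hr0 ht.1.le)]
      nlinarith [ht.1, lt_of_le_of_ne ht.2 ht1]
    exact ((hasSum_pow_succ_mul_cos_sub_one hrt φ).tendsto_sum_nat).const_mul t

lemma integral_mul_sum_range_pow_succ_mul_cos_sub_one (r φ : ℝ) (n : ℕ) :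
    ∫ t in (0 : ℝ)..1, t * ∑ k ∈ Finset.range n, (-(r * t)) ^ (k + 1) * (cos ((k + 1) * φ) - 1)
      = ∑ k ∈ Finset.range n, (-1) ^ k * r ^ (k + 1) * (1 - cos ((k + 1) * φ)) / (k + 3) := by
  simp_rw [Finset.mul_sum]
  rw [intervalIntegral.integral_finsetSum fun k _ => by
    apply Continuous.intervalIntegrable; fun_prop]
  refine Finset.sum_congr rfl fun k _ => ?_
  have hterm : ∀ t : ℝ, t * ((-(r * t)) ^ (k + 1) * (cos ((k + 1) * φ) - 1))
      = (-1) ^ k * r ^ (k + 1) * (1 - cos ((k + 1) * φ)) * t ^ (k + 2) := fun t => by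
    rw [neg_pow, mul_pow]; ring
  simp_rw [hterm]
  rw [intervalIntegral.integral_const_mul, integral_pow]
  push_cast
  ring

theorem stmt_0 (r φ : ℝ) (hr : r ∈ Set.Ioc (0:ℝ) 1) (hφ : φ ∈ Set.Ioo 0 π)
    (A B : ℝ)
    (hA : Tendsto (fun n => ∑ k ∈ Finset.range n,
        (-1)^((k+1)+1) * r^(k+1) * Real.cos ((k+1) * φ) / ((k+1) + 2)) atTop (𝓝 A))
    (hB : Tendsto (fun n => ∑ k ∈ Finset.range n,
        (-1)^((k+1)+1) * r^(k+1) / ((k+1) + 2)) atTop (𝓝 B)) :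
    A < B := by
  obtain ⟨hr0, hr1⟩ := hr
  have hsin : sin φ ≠ 0 := (sin_pos_of_pos_of_lt_pi hφ.1 hφ.2).ne'
  have hBA : Tendsto (fun n => ∫ t in (0 : ℝ)..1,
      t * ∑ k ∈ Finset.range n, (-(r * t)) ^ (k + 1) * (cos ((k + 1) * φ) - 1))
      atTop (𝓝 (B - A)) := by
    refine (hB.sub hA).congr fun n => ?_
    rw [integral_mul_sum_range_pow_succ_mul_cos_sub_one, ← Finset.sum_sub_distrib]
    refine Finset.sum_congr rfl fun k _ => ?_
    ring
  have hlim := tendsto_nhds_unique hBA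
    (tendsto_integral_mul_sum_range_pow_succ_mul_cos_sub_one hr0.le hr1 hsin)
  linarith [integral_mul_cosKernel_pos hr0 hr1 hsin]
end

section
/- For r ∈ (0, 1] and x ∈ (-1, 1], ∑_{k=1}^∞ (-1)^{k+1} r^k T_k(x)/(k+2) = (1/r²) ∫_0^r t² (t+x)/(t²+2xt+1) dt, where T_k is the k-th Chebyshev polynomial of the first kind. -/
/-! Truncating the generating function `∑ₖ Tₖ₊₁(x) (-t)ᵏ = (t + x) / (t² + 2xt + 1)` after `n`
terms leaves the remainder `(-t)ⁿ (Tₙ₊₁(x) + t Tₙ(x)) / (t² + 2xt + 1)`, which is at most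
`8 tⁿ / (1 + x)²` on `[0, 1]` because `|Tₖ| ≤ 1` on `[-1, 1]` and `t² + 2xt + 1 ≥ (1 + x)² / 4`.
Multiplying by `t²` and integrating over `[0, r]` termwise gives `r²` times the `n`-th partial sum,
up to an error of order `1 / n`. -/

open Real Filter Topology Polynomial.Chebyshev intervalIntegral

theorem Polynomial.Chebyshev.add_eq_mul_sum_eval_T_add {R : Type*} [CommRing R] (x t : R)
    (n : ℕ) :
    t + x = (t ^ 2 + 2 * x * t + 1) * ∑ k ∈ Finset.range n, (-t) ^ k * (T R (k + 1)).eval x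
      + (-t) ^ n * ((T R (n + 1)).eval x + t * (T R n).eval x) := by
  induction n with
  | zero => simp [add_comm]
  | succ n ih =>
    have hrec : (T R (n + 2)).eval x = 2 * x * (T R (n + 1)).eval x - (T R n).eval x := by
      simp [T_add_two]
    rw [Finset.sum_range_succ]
    push_cast
    rw [show (n : ℤ) + 1 + 1 = n + 2 by ring, hrec]
    linear_combination ih

theorem one_add_sq_div_four_le_denom {x t : ℝ} (hx : x ∈ Set.Icc (-1) 1) (ht : t ∈ Set.Icc 0 1) :
    (1 + x) ^ 2 / 4 ≤ t ^ 2 + 2 * x * t + 1 := by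
  obtain ⟨hx₀, hx₁⟩ := hx
  obtain ⟨ht₀, ht₁⟩ := ht
  rcases le_or_gt 0 x with h | h
  · nlinarith
  · nlinarith [sq_nonneg (t + x)]

theorem denom_pos {x t : ℝ} (hx : x ∈ Set.Ioc (-1) 1) (ht : t ∈ Set.Icc 0 1) :
    0 < t ^ 2 + 2 * x * t + 1 :=
  lt_of_lt_of_le (by nlinarith [hx.1])
    (one_add_sq_div_four_le_denom (Set.Ioc_subset_Icc_self hx) ht)

noncomputable def integrandTail (x : ℝ) (n : ℕ) (t : ℝ) : ℝ :=
  t ^ 2 * (-t) ^ n * ((T ℝ (n + 1)).eval x + t * (T ℝ n).eval x) / (t ^ 2 + 2 * x * t + 1)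

theorem continuousOn_integrandTail {x : ℝ} {n : ℕ} {s : Set ℝ}
    (hD : ∀ t ∈ s, t ^ 2 + 2 * x * t + 1 ≠ 0) : ContinuousOn (integrandTail x n) s :=
  ContinuousOn.div (by fun_prop) (by fun_prop) hD

theorem integrand_eq_sum_add_integrandTail {x t : ℝ} (hD : t ^ 2 + 2 * x * t + 1 ≠ 0) (n : ℕ) :
    t ^ 2 * (t + x) / (t ^ 2 + 2 * x * t + 1) =
      ∑ k ∈ Finset.range n, (-1) ^ k * (T ℝ (k + 1)).eval x * t ^ (k + 2)
        + integrandTail x n t := by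
  have hsum : ∑ k ∈ Finset.range n, (-1) ^ k * (T ℝ (k + 1)).eval x * t ^ (k + 2) =
      t ^ 2 * ∑ k ∈ Finset.range n, (-t) ^ k * (T ℝ (k + 1)).eval x := by
    rw [Finset.mul_sum]
    exact Finset.sum_congr rfl fun k _ => by rw [neg_pow]; ring
  rw [hsum, integrandTail, div_eq_iff hD, add_mul, div_mul_cancel₀ _ hD,
    add_eq_mul_sum_eval_T_add x t n]
  ring

theorem abs_integrandTail_le {x t : ℝ} (hx : x ∈ Set.Ioc (-1) 1) (ht : t ∈ Set.Icc 0 1) (n : ℕ) :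
    |integrandTail x n t| ≤ 8 / (1 + x) ^ 2 * t ^ (n + 2) := by
  have hx' : |x| ≤ 1 := abs_le.2 ⟨hx.1.le, hx.2⟩
  have hT₁ := abs_eval_T_real_le_one (n + 1) hx'
  have hT₀ := abs_eval_T_real_le_one n hx'
  have hnum : |t ^ 2 * (-t) ^ n * ((T ℝ (n + 1)).eval x + t * (T ℝ n).eval x)| ≤
      2 * t ^ (n + 2) := by
    have hsum : |(T ℝ (n + 1)).eval x + t * (T ℝ n).eval x| ≤ 2 := by
      have : |t * (T ℝ n).eval x| ≤ 1 := by
        rw [abs_mul, abs_of_nonneg ht.1]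
        nlinarith [abs_nonneg ((T ℝ n).eval x), ht.2]
      linarith [abs_add_le ((T ℝ (n + 1)).eval x) (t * (T ℝ n).eval x)]
    rw [abs_mul, abs_mul, abs_pow, abs_pow, abs_neg, abs_of_nonneg ht.1, ← pow_add, add_comm 2]
    nlinarith [pow_nonneg ht.1 (n + 2)]
  have hx₀ : 1 + x ≠ 0 := by linarith [hx.1]
  have hc : 0 < (1 + x) ^ 2 / 4 := by positivity
  have hD := one_add_sq_div_four_le_denom (Set.Ioc_subset_Icc_self hx) ht
  rw [integrandTail, abs_div, abs_of_pos (hc.trans_le hD), div_le_iff₀ (hc.trans_le hD)]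
  calc _ ≤ 2 * t ^ (n + 2) := hnum
    _ = 8 / (1 + x) ^ 2 * t ^ (n + 2) * ((1 + x) ^ 2 / 4) := by field_simp; ring
    _ ≤ 8 / (1 + x) ^ 2 * t ^ (n + 2) * (t ^ 2 + 2 * x * t + 1) :=
      mul_le_mul_of_nonneg_left hD (mul_nonneg (by positivity) (pow_nonneg ht.1 _))

theorem tendsto_integral_integrandTail {x r : ℝ} (hx : x ∈ Set.Ioc (-1) 1)
    (hr : r ∈ Set.Icc 0 1) :
    Tendsto (fun n => ∫ t in 0..r, integrandTail x n t) atTop (𝓝 0) := by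
  set C := 8 / (1 + x) ^ 2
  have hbound (n : ℕ) : ‖∫ t in 0..r, integrandTail x n t‖ ≤ C * (1 / (n + 1)) := calc
    _ ≤ ∫ t in 0..r, C * t ^ (n + 2) := by
      refine norm_integral_le_of_norm_le hr.1 (MeasureTheory.ae_of_all _ fun t ht => ?_)
        (Continuous.intervalIntegrable (by fun_prop) _ _)
      exact abs_integrandTail_le hx ⟨ht.1.le, ht.2.trans hr.2⟩ n
    _ = C * (r ^ (n + 3) / (n + 3)) := by
      rw [integral_const_mul, integral_pow]
      norm_num [add_assoc]
    _ ≤ C * (1 / (n + 1)) := by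
      gcongr
      · exact pow_le_one₀ hr.1 hr.2
      · norm_num
  exact squeeze_zero_norm hbound
    (by simpa using tendsto_one_div_add_atTop_nhds_zero_nat.const_mul C)

theorem integral_sum_eval_T_mul_pow (x r : ℝ) (n : ℕ) :
    ∫ t in 0..r, ∑ k ∈ Finset.range n, (-1) ^ k * (T ℝ (k + 1)).eval x * t ^ (k + 2) =
      r ^ 2 * ∑ k ∈ Finset.range n,
        (-1) ^ ((k + 1) + 1) * r ^ (k + 1) * (T ℝ (k + 1)).eval x / ((k + 1) + 2) := by
  rw [integral_finsetSum fun k _ => Continuous.intervalIntegrable (by fun_prop) _ _,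
    Finset.mul_sum]
  refine Finset.sum_congr rfl fun k _ => ?_
  rw [integral_const_mul, integral_pow]
  push_cast
  field_simp
  ring

theorem stmt_1 (r x : ℝ) (hr : r ∈ Set.Ioc (0:ℝ) 1) (hx : x ∈ Set.Ioc (-1:ℝ) 1) :
    Tendsto (fun n => ∑ k ∈ Finset.range n,
        (-1)^((k+1)+1) * r^(k+1) * (Polynomial.Chebyshev.T ℝ (k+1)).eval x / ((k+1) + 2))
      atTop
      (𝓝 ((1 / r^2) * ∫ t in (0:ℝ)..r, t^2 * (t + x) / (t^2 + 2*x*t + 1))) := by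
  have hD : ∀ t ∈ Set.uIcc 0 r, t ^ 2 + 2 * x * t + 1 ≠ 0 := by
    rw [Set.uIcc_of_le hr.1.le]
    exact fun t ht => (denom_pos hx ⟨ht.1, ht.2.trans hr.2⟩).ne'
  have hpartial (n : ℕ) : ∑ k ∈ Finset.range n,
      (-1) ^ ((k + 1) + 1) * r ^ (k + 1) * (T ℝ (k + 1)).eval x / ((k + 1) + 2) =
        (1 / r ^ 2) * (∫ t in 0..r, t ^ 2 * (t + x) / (t ^ 2 + 2 * x * t + 1))
          - (1 / r ^ 2) * ∫ t in 0..r, integrandTail x n t := by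
    have hsplit : ∫ t in 0..r, t ^ 2 * (t + x) / (t ^ 2 + 2 * x * t + 1) =
        ∫ t in 0..r, (∑ k ∈ Finset.range n, (-1) ^ k * (T ℝ (k + 1)).eval x * t ^ (k + 2)
          + integrandTail x n t) :=
      integral_congr fun t ht => integrand_eq_sum_add_integrandTail (hD t ht) n
    rw [hsplit, integral_add (Continuous.intervalIntegrable ?_ _ _)
        (continuousOn_integrandTail hD).intervalIntegrable, integral_sum_eval_T_mul_pow]
    · field_simp [hr.1.ne']
      ring
    · fun_prop
  refine Tendsto.congr (fun n => (hpartial n).symm) ?_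
  convert tendsto_const_nhds.sub
    ((tendsto_integral_integrandTail hx ⟨hr.1.le, hr.2⟩).const_mul (1 / r ^ 2)) using 2
  rw [mul_zero, sub_zero]
end

section
/- For r ∈ (0,1] and x ∈ (-1,1), (1/r²) ∫_0^r t²(t+x)/(t²+2xt+1) dt < (log(1+r) - r + r²/2)/r². -/
/-!
The integrand decreases to `t² / (t + 1)` as `x` increases to `1`: for `0 ≤ t ≤ 1` the difference is
`t² (1 - t) (1 - x) / ((t + 1) (t² + 2xt + 1)) ≥ 0`, strictly positive for `0 < t < 1`. Integrating,
the left side is strictly below `(1 / r²) ∫₀ʳ t² / (t + 1) dt`, and `log (1 + t) - t + t² / 2` is an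
antiderivative of `t² / (t + 1)`.
-/

open Real Set

lemma sq_add_two_mul_mul_add_one_pos {x : ℝ} (hx : x ∈ Ioo (-1 : ℝ) 1) (t : ℝ) :
    0 < t ^ 2 + 2 * x * t + 1 := by
  have : 0 < 1 - x ^ 2 := by nlinarith [hx.1, hx.2]
  nlinarith [sq_nonneg (t + x)]

lemma sq_div_add_one_sub_sq_mul_add_div {x t : ℝ} (hx : x ∈ Ioo (-1 : ℝ) 1) (ht : 0 ≤ t) :
    t ^ 2 / (t + 1) - t ^ 2 * (t + x) / (t ^ 2 + 2 * x * t + 1)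
      = t ^ 2 * (1 - t) * (1 - x) / ((t + 1) * (t ^ 2 + 2 * x * t + 1)) := by
  rw [div_sub_div _ _ (by positivity) (sq_add_two_mul_mul_add_one_pos hx t).ne']
  ring

lemma sq_mul_add_div_le_sq_div_add_one {x t : ℝ} (hx : x ∈ Ioo (-1 : ℝ) 1) (ht : t ∈ Icc (0 : ℝ) 1) :
    t ^ 2 * (t + x) / (t ^ 2 + 2 * x * t + 1) ≤ t ^ 2 / (t + 1) := by
  rw [← sub_nonneg, sq_div_add_one_sub_sq_mul_add_div hx ht.1]
  have := sq_add_two_mul_mul_add_one_pos hx t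
  have := sub_nonneg.2 ht.2
  have := sub_pos.2 hx.2
  have := ht.1
  positivity

lemma sq_mul_add_div_lt_sq_div_add_one {x t : ℝ} (hx : x ∈ Ioo (-1 : ℝ) 1) (ht : t ∈ Ioo (0 : ℝ) 1) :
    t ^ 2 * (t + x) / (t ^ 2 + 2 * x * t + 1) < t ^ 2 / (t + 1) := by
  rw [← sub_pos, sq_div_add_one_sub_sq_mul_add_div hx ht.1.le]
  have := sq_add_two_mul_mul_add_one_pos hx t
  have := sub_pos.2 ht.2
  have := sub_pos.2 hx.2
  have := ht.1
  positivity

lemma integral_sq_div_add_one {r : ℝ} (hr : -1 < r) :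
    ∫ t in (0 : ℝ)..r, t ^ 2 / (t + 1) = log (1 + r) - r + r ^ 2 / 2 := by
  have hpos : ∀ t ∈ uIcc (0 : ℝ) r, 0 < 1 + t := fun t ht => by
    linarith [(lt_min neg_one_lt_zero hr).trans_le ht.1]
  have hderiv : ∀ t ∈ uIcc (0 : ℝ) r,
      HasDerivAt (fun t => log (1 + t) - t + t ^ 2 / 2) (t ^ 2 / (t + 1)) t := by
    intro t ht
    have h1t := (hpos t ht).ne'
    refine (((((hasDerivAt_id t).const_add 1).log h1t).sub (hasDerivAt_id t)).add
      ((hasDerivAt_pow 2 t).div_const 2)).congr_deriv ?_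
    rw [id_eq, add_comm t 1]
    field_simp
    ring
  have hcont : ContinuousOn (fun t : ℝ => t ^ 2 / (t + 1)) (uIcc 0 r) :=
    continuousOn_id.pow 2 |>.div (continuousOn_id.add continuousOn_const) fun t ht => by
      linarith [hpos t ht]
  rw [intervalIntegral.integral_eq_sub_of_hasDerivAt hderiv hcont.intervalIntegrable]
  simp

lemma integral_sq_mul_add_div_lt {r x : ℝ} (hr : r ∈ Ioc (0 : ℝ) 1) (hx : x ∈ Ioo (-1 : ℝ) 1) :
    ∫ t in (0 : ℝ)..r, t ^ 2 * (t + x) / (t ^ 2 + 2 * x * t + 1)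
      < ∫ t in (0 : ℝ)..r, t ^ 2 / (t + 1) := by
  refine intervalIntegral.integral_lt_integral_of_continuousOn_of_le_of_exists_lt hr.1
    ?_ ?_ (fun t ht => sq_mul_add_div_le_sq_div_add_one hx ⟨ht.1.le, ht.2.trans hr.2⟩)
    ⟨r / 2, ⟨by linarith [hr.1], by linarith [hr.1]⟩,
      sq_mul_add_div_lt_sq_div_add_one hx ⟨by linarith [hr.1], by linarith [hr.2]⟩⟩
  · exact (continuousOn_id.pow 2 |>.mul (continuousOn_id.add continuousOn_const)).div
      (by fun_prop) fun t _ => (sq_add_two_mul_mul_add_one_pos hx t).ne'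
  · exact (continuousOn_id.pow 2).div (continuousOn_id.add continuousOn_const) fun t ht => by
      linarith [ht.1]

theorem stmt_7 (r x : ℝ) (hr : r ∈ Set.Ioc (0:ℝ) 1) (hx : x ∈ Set.Ioo (-1:ℝ) 1) :
    (1 / r^2) * ∫ t in (0:ℝ)..r, t^2 * (t + x) / (t^2 + 2*x*t + 1)
      < (Real.log (1 + r) - r + r^2 / 2) / r^2 := by
  rw [← integral_sq_div_add_one (by linarith [hr.1]), one_div_mul_eq_div]
  exact div_lt_div_of_pos_right (integral_sq_mul_add_div_lt hr hx) (pow_pos hr.1 2)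
end

section
/- For φ ∈ (0, π), ∑_{k=1}^∞ (-1)^{k+1} cos(kφ)/(k+2) < log 2 - 1/2. -/
/-!
Write `1 / (k + 3) = ∫₀¹ t ^ (k + 2)` and `u = exp (φ i)`. The partial sums of the series are then
integrals over `[0, 1]` of `t * Re (t u ∑ (-t u) ^ k)`. These geometric sums are bounded by
`2 / sin φ` uniformly in `t`, since `|1 + t u| ≥ sin φ`, and for `t < 1` they converge to
`t² (t + cos φ) / (1 + 2 t cos φ + t²)`. By dominated convergence the series sums to the integral
of this function, which falls short of `t² / (1 + t)` by
`t² (1 - t) (1 - cos φ) / ((1 + t) (1 + 2 t cos φ + t²))`; finally `∫₀¹ t² / (1 + t) = log 2 - 1/2`.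
-/

open Real Filter Topology Finset intervalIntegral

lemma integral_sq_div_one_add : ∫ t in (0:ℝ)..1, t ^ 2 / (1 + t) = log 2 - 1 / 2 := by
  have hderiv : ∀ t ∈ Set.uIcc (0:ℝ) 1,
      HasDerivAt (fun t ↦ t ^ 2 / 2 - t + log (1 + t)) (t ^ 2 / (1 + t)) t := by
    intro t ht
    rw [Set.uIcc_of_le zero_le_one] at ht
    have hpos : (0:ℝ) < 1 + t := by linarith [ht.1]
    refine ((((hasDerivAt_pow 2 t).div_const 2).sub (hasDerivAt_id t)).add
      (((hasDerivAt_id t).const_add 1).log hpos.ne')).congr_deriv ?_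
    simp only [id]
    field_simp
    ring
  have hcont : ContinuousOn (fun t : ℝ ↦ t ^ 2 / (1 + t)) (Set.uIcc 0 1) := by
    refine ContinuousOn.div (by fun_prop) (by fun_prop) fun t ht ↦ ?_
    rw [Set.uIcc_of_le zero_le_one] at ht
    linarith [ht.1]
  rw [integral_eq_sub_of_hasDerivAt hderiv hcont.intervalIntegrable]
  norm_num
  ring

lemma integral_sum_mul_pow_add_two (c : ℕ → ℝ) (n : ℕ) :
    ∫ t in (0:ℝ)..1, ∑ k ∈ range n, c k * t ^ (k + 2) = ∑ k ∈ range n, c k / (k + 3) := by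
  rw [integral_finsetSum fun k _ ↦
    ((continuous_pow (k + 2)).intervalIntegrable 0 1).const_mul (c k)]
  refine sum_congr rfl fun k _ ↦ ?_
  rw [integral_const_mul, integral_pow]
  push_cast
  ring

lemma norm_geom_sum_le {𝕜 : Type*} [NormedDivisionRing 𝕜] {q : 𝕜} (hq : ‖q‖ ≤ 1) (hq1 : q ≠ 1)
    (n : ℕ) : ‖∑ k ∈ range n, q ^ k‖ ≤ 2 / ‖1 - q‖ := by
  rw [geom_sum_eq hq1, norm_div, norm_sub_rev q]
  gcongr
  calc ‖q ^ n - 1‖ ≤ ‖q‖ ^ n + ‖(1 : 𝕜)‖ := by rw [← norm_pow]; exact norm_sub_le _ _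
    _ ≤ 2 := by rw [norm_one]; linarith [pow_le_one₀ (n := n) (norm_nonneg q) hq]

namespace Complex

variable {u : ℂ}

lemma re_sq_add_im_sq_of_norm_eq_one (hu : ‖u‖ = 1) : u.re ^ 2 + u.im ^ 2 = 1 := by
  rw [← sq_norm_sub_sq_re, hu]
  ring

lemma normSq_one_add_ofReal_mul (hu : ‖u‖ = 1) (t : ℝ) :
    normSq (1 + t * u) = 1 + 2 * t * u.re + t ^ 2 := by
  rw [normSq_apply]
  simp only [add_re, add_im, one_re, one_im, re_ofReal_mul, im_ofReal_mul]
  linear_combination t ^ 2 * re_sq_add_im_sq_of_norm_eq_one hu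

lemma abs_im_le_norm_one_add_ofReal_mul (hu : ‖u‖ = 1) (t : ℝ) : |u.im| ≤ ‖1 + t * u‖ := by
  refine (sq_le_sq₀ (abs_nonneg _) (norm_nonneg _)).1 ?_
  rw [sq_abs, Complex.sq_norm, normSq_one_add_ofReal_mul hu]
  nlinarith [sq_nonneg (t + u.re), re_sq_add_im_sq_of_norm_eq_one hu]

lemma mul_re_div_one_add_ofReal_mul (hu : ‖u‖ = 1) (t : ℝ) :
    t * (t * u / (1 + t * u)).re = t ^ 2 * (t + u.re) / (1 + 2 * t * u.re + t ^ 2) := by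
  rw [div_re, normSq_one_add_ofReal_mul hu]
  simp only [add_re, add_im, one_re, one_im, re_ofReal_mul, im_ofReal_mul]
  rw [← add_div, mul_div_assoc']
  congr 1
  linear_combination t ^ 3 * re_sq_add_im_sq_of_norm_eq_one hu

lemma sum_neg_one_pow_mul_re_pow_mul_pow (u : ℂ) (t : ℝ) (n : ℕ) :
    ∑ k ∈ range n, (-1) ^ k * (u ^ (k + 1)).re * t ^ (k + 2) =
      t * (t * u * ∑ k ∈ range n, (-(t * u)) ^ k).re := by
  rw [mul_sum, re_sum, mul_sum]
  refine sum_congr rfl fun k _ ↦ ?_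
  have : t * u * (-(t * u)) ^ k = (((-1) ^ k * t ^ (k + 1) : ℝ) : ℂ) * u ^ (k + 1) := by
    push_cast
    ring
  rw [this, re_ofReal_mul]
  ring

lemma abs_sum_neg_one_pow_mul_re_pow_mul_pow_le (hu : ‖u‖ = 1) (him : u.im ≠ 0) {t : ℝ}
    (ht : t ∈ Set.Icc (0:ℝ) 1) (n : ℕ) :
    |∑ k ∈ range n, (-1) ^ k * (u ^ (k + 1)).re * t ^ (k + 2)| ≤ 2 / |u.im| := by
  have hnorm : ‖-(t * u)‖ = t := by simp [hu, abs_of_nonneg ht.1]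
  have hgap := abs_im_le_norm_one_add_ofReal_mul hu t
  have hne : -(t * u) ≠ 1 := by
    intro h
    rw [← neg_neg (t * u : ℂ), h, add_neg_cancel, norm_zero] at hgap
    exact him (abs_nonpos_iff.1 hgap)
  rw [sum_neg_one_pow_mul_re_pow_mul_pow, abs_mul, abs_of_nonneg ht.1]
  calc t * |(t * u * ∑ k ∈ range n, (-(t * u)) ^ k).re|
      ≤ 1 * ‖∑ k ∈ range n, (-(t * u)) ^ k‖ := by
        gcongr
        · exact ht.2
        · refine (abs_re_le_norm _).trans ?_
          rw [norm_mul, ← norm_neg (t * u : ℂ), hnorm]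
          exact mul_le_of_le_one_left (norm_nonneg _) ht.2
    _ ≤ 1 * (2 / ‖1 - -(t * u)‖) := by gcongr; exact norm_geom_sum_le (hnorm.le.trans ht.2) hne n
    _ ≤ 2 / |u.im| := by
        rw [one_mul, sub_neg_eq_add]
        exact div_le_div_of_nonneg_left zero_le_two (abs_pos.2 him) hgap

lemma tendsto_sum_neg_one_pow_mul_re_pow_mul_pow (hu : ‖u‖ = 1) {t : ℝ}
    (ht : t ∈ Set.Ico (0:ℝ) 1) :
    Tendsto (fun n ↦ ∑ k ∈ range n, (-1) ^ k * (u ^ (k + 1)).re * t ^ (k + 2)) atTop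
      (𝓝 (t ^ 2 * (t + u.re) / (1 + 2 * t * u.re + t ^ 2))) := by
  have hnorm : ‖-(t * u)‖ < 1 := by simpa [hu, abs_of_nonneg ht.1] using ht.2
  have hgeom := (hasSum_geometric_of_norm_lt_one hnorm).tendsto_sum_nat
  have hcont : Continuous fun z : ℂ ↦ t * (t * u * z).re := by fun_prop
  simp_rw [sum_neg_one_pow_mul_re_pow_mul_pow]
  have hlim := (hcont.tendsto _).comp hgeom
  rwa [sub_neg_eq_add, ← div_eq_mul_inv, mul_re_div_one_add_ofReal_mul hu] at hlim

lemma tendsto_sum_neg_one_pow_mul_re_pow_div (hu : ‖u‖ = 1) (him : u.im ≠ 0) :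
    Tendsto (fun n ↦ ∑ k ∈ range n, (-1) ^ k * (u ^ (k + 1)).re / (k + 3)) atTop
      (𝓝 (∫ t in (0:ℝ)..1, t ^ 2 * (t + u.re) / (1 + 2 * t * u.re + t ^ 2))) := by
  refine Tendsto.congr (fun n ↦ integral_sum_mul_pow_add_two _ n) ?_
  refine tendsto_integral_filter_of_dominated_convergence (fun _ ↦ 2 / |u.im|)
    (Eventually.of_forall fun n ↦ (by fun_prop : Continuous _).aestronglyMeasurable) ?_
    intervalIntegrable_const ?_
  · refine Eventually.of_forall fun n ↦ MeasureTheory.ae_of_all _ fun t ht ↦ ?_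
    rw [Set.uIoc_of_le zero_le_one] at ht
    exact abs_sum_neg_one_pow_mul_re_pow_mul_pow_le hu him (Set.Ioc_subset_Icc_self ht) n
  · filter_upwards [MeasureTheory.Measure.ae_ne MeasureTheory.volume 1] with t hne ht
    rw [Set.uIoc_of_le zero_le_one] at ht
    exact tendsto_sum_neg_one_pow_mul_re_pow_mul_pow hu ⟨ht.1.le, ht.2.lt_of_ne hne⟩

lemma abs_re_lt_one (hu : ‖u‖ = 1) (him : u.im ≠ 0) : |u.re| < 1 := by
  rw [← sq_lt_one_iff_abs_lt_one]
  nlinarith [re_sq_add_im_sq_of_norm_eq_one hu, pow_pos (abs_pos.2 him) 2, sq_abs u.im]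

end Complex

lemma one_add_two_mul_add_sq_pos {a : ℝ} (ha : |a| < 1) (t : ℝ) : 0 < 1 + 2 * t * a + t ^ 2 := by
  nlinarith [sq_nonneg (t + a), (sq_lt_one_iff_abs_lt_one a).2 ha]

lemma sq_mul_add_div_le_sq_div_one_add {a t : ℝ} (ha : |a| < 1) (ht : t ∈ Set.Icc (0:ℝ) 1) :
    t ^ 2 * (t + a) / (1 + 2 * t * a + t ^ 2) ≤ t ^ 2 / (1 + t) := by
  rw [div_le_div_iff₀ (one_add_two_mul_add_sq_pos ha t) (by linarith [ht.1])]
  nlinarith [mul_nonneg (mul_nonneg (sq_nonneg t) (sub_nonneg.2 ht.2))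
    (sub_nonneg.2 (abs_lt.1 ha).2.le)]

lemma sq_mul_add_div_lt_sq_div_one_add {a t : ℝ} (ha : |a| < 1) (ht : t ∈ Set.Ioo (0:ℝ) 1) :
    t ^ 2 * (t + a) / (1 + 2 * t * a + t ^ 2) < t ^ 2 / (1 + t) := by
  rw [div_lt_div_iff₀ (one_add_two_mul_add_sq_pos ha t) (by linarith [ht.1])]
  nlinarith [mul_pos (mul_pos (pow_pos ht.1 2) (sub_pos.2 ht.2)) (sub_pos.2 (abs_lt.1 ha).2)]

lemma integral_sq_mul_add_div_lt_s9 {a : ℝ} (ha : |a| < 1) :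
    ∫ t in (0:ℝ)..1, t ^ 2 * (t + a) / (1 + 2 * t * a + t ^ 2) < log 2 - 1 / 2 := by
  rw [← integral_sq_div_one_add]
  refine integral_lt_integral_of_continuousOn_of_le_of_exists_lt one_pos
    (ContinuousOn.div (by fun_prop) (by fun_prop)
      fun t _ ↦ (one_add_two_mul_add_sq_pos ha t).ne')
    (ContinuousOn.div (by fun_prop) (by fun_prop) fun t ht ↦ by linarith [ht.1])
    (fun t ht ↦ sq_mul_add_div_le_sq_div_one_add ha (Set.Ioc_subset_Icc_self ht))
    ⟨1 / 2, by norm_num, sq_mul_add_div_lt_sq_div_one_add ha (by norm_num)⟩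

theorem stmt_9 (φ : ℝ) (hφ : φ ∈ Set.Ioo 0 π) (S : ℝ)
    (hS : Tendsto (fun n => ∑ k ∈ Finset.range n,
        (-1)^((k+1)+1) * Real.cos ((k+1) * φ) / ((k+1) + 2)) atTop (𝓝 S)) :
    S < Real.log 2 - 1/2 := by
  set u := Complex.exp (φ * Complex.I)
  have hu : ‖u‖ = 1 := Complex.norm_exp_ofReal_mul_I φ
  have him : u.im ≠ 0 := by
    rw [Complex.exp_ofReal_mul_I_im]
    exact (sin_pos_of_pos_of_lt_pi hφ.1 hφ.2).ne'
  have hterm (k : ℕ) : (-1) ^ k * (u ^ (k + 1)).re / (k + 3) =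
      (-1) ^ ((k + 1) + 1) * cos ((k + 1) * φ) / ((k + 1) + 2) := by
    rw [← Complex.exp_nat_mul, ← mul_assoc]
    rw_mod_cast [Complex.exp_ofReal_mul_I_re]
    push_cast
    ring
  have hSint := tendsto_nhds_unique hS
    ((Complex.tendsto_sum_neg_one_pow_mul_re_pow_div hu him).congr fun n ↦ sum_congr rfl
      fun k _ ↦ hterm k)
  rw [hSint]
  exact integral_sq_mul_add_div_lt_s9 (Complex.abs_re_lt_one hu him)
end
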